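/- arXiv:2302.10877 — 7 statements merged into one kernel-verified Lean document; each statement's English description precedes it below -/
import Mathlib

section
/- Let $k$ be a field, $B = k[t]/(t^{dm})$ and let $A \subseteq B$ be a $k$-subalgebra such that $B$ is a free $A$-module of rank $d$ (with $m, d \geq 1$). Then $A$ is a local $k$-algebra whose maximal ideal is principal; in particular $A \cong k[t]/(t^m)$. -/
/-!
Write `B = k[t]/(t^{dm})`. Since `B ≅ A^d` as an `A`-module, `dim_k A = m`, and for the
augmentation ideal `I` of `A`, of codimension one, `IB ≅ I^d` has dimension `dm - d`. Comparing
with the ideals `(t^j)` of `B`, of dimension `dm - j`, some `a ∈ I` has order exactly `d`, i.e. is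
`t^d` times a unit of `B`. Then `a^m = 0 ≠ a^(m-1)`, so `t ↦ a` embeds `k[t]/(t^m)` into `A`, and
this is an isomorphism by counting dimensions.
-/

open Polynomial Module

section Free

variable {k A B : Type*} [Field k] [CommRing A] [CommRing B] [Algebra k A] [Algebra k B]
  [Algebra A B] [IsScalarTower k A B]

theorem Module.Basis.mem_ideal_map_iff {ι : Type*} [Fintype ι] (e : Basis ι A B) (I : Ideal A)
    (x : B) : x ∈ I.map (algebraMap A B) ↔ ∀ i, e.repr x i ∈ I := by
  refine ⟨fun hx => ?_, fun hx => ?_⟩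
  · rw [← Submodule.restrictScalars_mem A, ← Ideal.smul_top_eq_map] at hx
    refine Submodule.smul_induction_on hx (fun a ha b _ i => ?_) (fun x y hx hy i => ?_)
    · rw [map_smul, Finsupp.smul_apply, smul_eq_mul]
      exact I.mul_mem_right _ ha
    · rw [map_add, Finsupp.add_apply]
      exact I.add_mem (hx i) (hy i)
  · rw [← e.sum_repr x]
    refine Ideal.sum_mem _ fun i _ => ?_
    rw [Algebra.smul_def]
    exact Ideal.mul_mem_right _ _ (Ideal.mem_map_of_mem _ (hx i))

theorem finrank_map_algebraMap [Nontrivial A] [Module.Free A B] [Module.Finite A B]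
    [Module.Finite k A] (I : Ideal A) :
    finrank k ((I.map (algebraMap A B)).restrictScalars k) =
      finrank A B * finrank k (I.restrictScalars k) := by
  let e := Module.Free.chooseBasis A B
  let φ : (Module.Free.ChooseBasisIndex A B → I.restrictScalars k) →ₗ[k] B :=
    (e.equivFun.symm.toLinearMap.restrictScalars k) ∘ₗ
      LinearMap.piMap fun _ => (I.restrictScalars k).subtype
  have hφ : Function.Injective φ :=
    e.equivFun.symm.injective.comp fun f g h => funext fun i => Subtype.ext (congrFun h i)
  have hrange : LinearMap.range φ = (I.map (algebraMap A B)).restrictScalars k := by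
    ext x
    rw [Submodule.restrictScalars_mem, e.mem_ideal_map_iff]
    constructor
    · rintro ⟨f, rfl⟩ i
      show e.repr (e.equivFun.symm _) i ∈ I
      rw [← e.equivFun_apply, e.equivFun.apply_symm_apply]
      exact (f i).2
    · intro hx
      exact ⟨fun i => ⟨e.repr x i, hx i⟩, by simp [φ]⟩
  rw [← hrange, LinearMap.finrank_range_of_inj hφ, Module.finrank_pi_fintype, Finset.sum_const,
    Finset.card_univ, smul_eq_mul, ← Module.finrank_eq_card_chooseBasisIndex]

end Free

theorem AlgHom.finrank_ker_add_one {k R : Type*} [Field k] [CommRing R] [Algebra k R]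
    [Module.Finite k R] (φ : R →ₐ[k] k) :
    finrank k ((RingHom.ker φ).restrictScalars k) + 1 = finrank k R := by
  have hsurj : Function.Surjective φ.toLinearMap := fun c => ⟨algebraMap k R c, φ.commutes c⟩
  rw [← LinearMap.finrank_range_add_finrank_ker φ.toLinearMap, LinearMap.range_eq_top.2 hsurj,
    finrank_top, finrank_self, add_comm]
  rfl

theorem Ideal.Quotient.isLocalRing_pow {R : Type*} [CommRing R] (I : Ideal R) [I.IsMaximal]
    {n : ℕ} (hn : n ≠ 0) : IsLocalRing (R ⧸ I ^ n) := by
  have : Nontrivial (R ⧸ I ^ n) := Ideal.Quotient.nontrivial_iff.2 <| by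
    simpa [Ideal.pow_eq_top_iff, hn] using IsMaximal.ne_top ‹_›
  refine IsLocalRing.of_nonunits_add fun a b ha hb => ?_
  obtain ⟨x, rfl⟩ := Ideal.Quotient.mk_surjective a
  obtain ⟨y, rfl⟩ := Ideal.Quotient.mk_surjective b
  simp only [mem_nonunits_iff, ← map_add, isUnit_mk_pow_iff_notMem I hn, not_not] at ha hb ⊢
  exact I.add_mem ha hb

instance Polynomial.isMaximal_span_X {k : Type*} [Field k] :
    (Ideal.span {(X : k[X])}).IsMaximal :=
  PrincipalIdealRing.isMaximal_of_irreducible irreducible_X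

abbrev TruncatedPolynomial (k : Type*) [Field k] (n : ℕ) : Type _ :=
  k[X] ⧸ Ideal.span {(X : k[X]) ^ n}

namespace TruncatedPolynomial

variable {k : Type*} [Field k] {n : ℕ}

variable (k n) in
noncomputable abbrev t : TruncatedPolynomial k n := Ideal.Quotient.mk _ X

instance : Module.Finite k (TruncatedPolynomial k n) := (monic_X_pow n).finite_quotient

instance : IsPrincipalIdealRing (TruncatedPolynomial k n) :=
  IsPrincipalIdealRing.of_surjective _ Ideal.Quotient.mk_surjective

theorem finrank_eq : finrank k (TruncatedPolynomial k n) = n := by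
  rw [finrank_quotient_span_eq_natDegree, natDegree_X_pow]

theorem isLocalRing (hn : n ≠ 0) : IsLocalRing (TruncatedPolynomial k n) := by
  show IsLocalRing (k[X] ⧸ Ideal.span {(X : k[X]) ^ n})
  rw [← Ideal.span_singleton_pow]
  exact Ideal.Quotient.isLocalRing_pow _ hn

theorem t_pow_eq_zero_iff {j : ℕ} : t k n ^ j = 0 ↔ n ≤ j := by
  rw [← map_pow, Ideal.Quotient.eq_zero_iff_mem, Ideal.mem_span_singleton,
    pow_dvd_pow_iff X_ne_zero not_isUnit_X]

theorem exists_eq_t_pow_mul_unit {x : TruncatedPolynomial k n} (hx : x ≠ 0) :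
    ∃ j < n, ∃ u : (TruncatedPolynomial k n)ˣ, x = t k n ^ j * u := by
  obtain ⟨p, rfl⟩ := Ideal.Quotient.mk_surjective x
  have hp : p ≠ 0 := by rintro rfl; exact hx (map_zero _)
  obtain ⟨q, hpq, hq⟩ := exists_eq_pow_rootMultiplicity_mul_and_not_dvd p hp 0
  rw [C_0, sub_zero] at hpq hq
  generalize p.rootMultiplicity 0 = j at hpq
  subst hpq
  have hu : IsUnit (Ideal.Quotient.mk _ q : TruncatedPolynomial k n) := by
    have hqX : q ∉ Ideal.span {X} := by rwa [Ideal.mem_span_singleton]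
    rw [← Ideal.span_singleton_pow]
    exact Ideal.Quotient.isUnit_mk_pow_of_notMem _ hqX
  have hx' : Ideal.Quotient.mk _ (X ^ j * q) = t k n ^ j * (hu.unit : TruncatedPolynomial k n) := by
    rw [map_mul, map_pow, hu.unit_spec]
  refine ⟨j, ?_, hu.unit, hx'⟩
  by_contra! h
  exact hx (by rw [hx', t_pow_eq_zero_iff.2 h, zero_mul])

theorem dvd_t_pow_pred {x : TruncatedPolynomial k n} (hx : x ≠ 0) : x ∣ t k n ^ (n - 1) := by
  obtain ⟨j, hj, u, rfl⟩ := exists_eq_t_pow_mul_unit hx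
  refine ⟨t k n ^ (n - 1 - j) * ↑u⁻¹, ?_⟩
  rw [mul_mul_mul_comm, ← pow_add, u.mul_inv, mul_one]
  congr 1
  omega

theorem finrank_quotient_span_t_pow {j : ℕ} (hj : j ≤ n) :
    finrank k (TruncatedPolynomial k n ⧸ Ideal.span {t k n ^ j}) = j := by
  have hle : Ideal.span {(X : k[X]) ^ n} ≤ Ideal.span {X ^ j} :=
    Ideal.span_singleton_le_span_singleton.2 (pow_dvd_pow X hj)
  have hmap : Ideal.span {t k n ^ j} =
      (Ideal.span {(X : k[X]) ^ j}).map (Ideal.Quotient.mkₐ k (Ideal.span {(X : k[X]) ^ n})) := by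
    rw [Ideal.map_span, Set.image_singleton, map_pow]
    rfl
  rw [hmap, (DoubleQuot.quotQuotEquivQuotOfLEₐ k hle).toLinearEquiv.finrank_eq,
    finrank_quotient_span_eq_natDegree, natDegree_X_pow]

theorem finrank_span_t_pow {j : ℕ} (hj : j ≤ n) :
    finrank k ((Ideal.span {t k n ^ j}).restrictScalars k) = n - j := by
  have := Submodule.finrank_quotient_add_finrank ((Ideal.span {t k n ^ j}).restrictScalars k)
  rw [(Submodule.Quotient.restrictScalarsEquiv k _).finrank_eq, finrank_quotient_span_t_pow hj,
    finrank_eq] at this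
  omega

theorem exists_mem_eq_t_pow_mul_unit {S : Set (TruncatedPolynomial k n)} {d : ℕ} (hd : d < n)
    (hS : finrank k ((Ideal.span S).restrictScalars k) = n - d) :
    ∃ s ∈ S, ∃ u : (TruncatedPolynomial k n)ˣ, s = t k n ^ d * u := by
  obtain ⟨s, hsS, hs⟩ : ∃ s ∈ S, s ∉ Ideal.span {t k n ^ (d + 1)} := by
    by_contra! h
    have := Submodule.finrank_mono (Submodule.restrictScalars_mono k (Ideal.span_le.2 h))
    rw [hS, finrank_span_t_pow hd] at this
    omega
  have hs0 : s ≠ 0 := fun h => hs (h ▸ Submodule.zero_mem _)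
  obtain ⟨j, hj, u, rfl⟩ := exists_eq_t_pow_mul_unit hs0
  have hjd : j ≤ d := by
    by_contra! h
    refine hs (Ideal.mem_span_singleton.2 ⟨t k n ^ (j - (d + 1)) * u, ?_⟩)
    rw [← mul_assoc, ← pow_add]
    congr 2
    omega
  have hdj : d ≤ j := by
    have hle : Ideal.span {t k n ^ j} ≤ Ideal.span S := by
      rw [← Ideal.span_singleton_mul_right_unit u.isUnit, Ideal.span_singleton_le_iff_mem]
      exact Ideal.subset_span hsS
    have := Submodule.finrank_mono (Submodule.restrictScalars_mono k hle)
    rw [hS, finrank_span_t_pow hj.le] at this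
    omega
  exact ⟨_, hsS, u, by rw [le_antisymm hjd hdj]⟩

section eval

variable {R : Type*} [CommRing R] [Algebra k R] {a : R}

variable (k) in
noncomputable def evalₐ (a : R) (ha : a ^ n = 0) : TruncatedPolynomial k n →ₐ[k] R :=
  Ideal.Quotient.liftₐ _ (aeval a) fun p hp => by
    obtain ⟨q, rfl⟩ := Ideal.mem_span_singleton'.1 hp
    rw [map_mul, map_pow, aeval_X, ha, mul_zero]

@[simp]
theorem evalₐ_t (ha : a ^ n = 0) : evalₐ k a ha (t k n) = a := aeval_X a

theorem evalₐ_injective (ha : a ^ n = 0) (ha' : a ^ (n - 1) ≠ 0) :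
    Function.Injective (evalₐ k a ha) := by
  refine (injective_iff_map_eq_zero _).2 fun x hx => ?_
  by_contra hx0
  obtain ⟨c, hc⟩ := dvd_t_pow_pred hx0
  apply ha'
  rw [← evalₐ_t (k := k) ha, ← map_pow, hc, map_mul, hx, zero_mul]

noncomputable def algEquivOfPowEqZero [Module.Finite k R] (hR : finrank k R = n)
    (ha : a ^ n = 0) (ha' : a ^ (n - 1) ≠ 0) : TruncatedPolynomial k n ≃ₐ[k] R :=
  AlgEquiv.ofBijective (evalₐ k a ha) <| by
    have hinj : Function.Injective (evalₐ k a ha).toLinearMap := evalₐ_injective ha ha'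
    exact ⟨hinj, (LinearMap.injective_iff_surjective_of_finrank_eq_finrank
      (finrank_eq.trans hR.symm)).1 hinj⟩

end eval

section Subalgebra

variable {d m : ℕ} (A : Subalgebra k (TruncatedPolynomial k (d * m)))
  [Module.Free A (TruncatedPolynomial k (d * m))]

local notation "B" => TruncatedPolynomial k (d * m)

theorem finrank_subalgebra (hd : d ≠ 0) (hm : m ≠ 0) (hrank : finrank A B = d) :
    finrank k A = m := by
  have := (isLocalRing (k := k) (mul_ne_zero hd hm)).toNontrivial
  have h := Module.finrank_mul_finrank k A B
  rw [hrank, finrank_eq] at h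
  exact Nat.eq_of_mul_eq_mul_right (Nat.pos_of_ne_zero hd) (h.trans (mul_comm d m))

theorem exists_pow_eq_zero_pow_pred_ne_zero (hd : d ≠ 0) (hm : m ≠ 0) (hrank : finrank A B = d) :
    ∃ a : A, a ^ m = 0 ∧ a ^ (m - 1) ≠ 0 := by
  have hn : d * m ≠ 0 := mul_ne_zero hd hm
  have := (isLocalRing (k := k) hn).toNontrivial
  obtain rfl | hm2 : m = 1 ∨ 2 ≤ m := by omega
  · exact ⟨0, pow_one 0, by simp⟩
  let ε : A →ₐ[k] k := (evalₐ k (0 : k) (zero_pow hn)).comp A.val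
  have hIB : finrank k (((RingHom.ker ε).map (algebraMap A B)).restrictScalars k) = d * m - d := by
    have : Module.Finite A B := .of_restrictScalars_finite k _ _
    have hI := ε.finrank_ker_add_one
    rw [finrank_subalgebra A hd hm hrank] at hI
    rw [finrank_map_algebraMap, hrank]
    exact Nat.eq_sub_of_add_eq (by rw [← mul_add_one, hI])
  obtain ⟨_, ⟨a, -, rfl⟩, u, hau⟩ :=
    exists_mem_eq_t_pow_mul_unit (lt_mul_of_one_lt_right (Nat.pos_of_ne_zero hd) hm2) hIB
  have hpow (i : ℕ) : ((a ^ i : A) : B) = t k (d * m) ^ (d * i) * ↑(u ^ i) := by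
    rw [SubmonoidClass.coe_pow, show (a : B) = _ from hau, mul_pow, ← pow_mul,
      Units.val_pow_eq_pow_val]
  refine ⟨a, Subtype.ext ?_, fun h => ?_⟩
  · rw [hpow, t_pow_eq_zero_iff.2 le_rfl, zero_mul, ZeroMemClass.coe_zero]
  · have h' := congrArg Subtype.val h
    rw [hpow, ZeroMemClass.coe_zero, Units.mul_left_eq_zero, t_pow_eq_zero_iff] at h'
    exact absurd h' (Nat.not_le.2 (Nat.mul_lt_mul_of_pos_left (by omega) (Nat.pos_of_ne_zero hd)))

end Subalgebra

end TruncatedPolynomial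

open TruncatedPolynomial in
/-- If `A ⊆ B = k[t]/(t^{dm})` is a subalgebra such that `B` is a free
`A`-module of rank `d`, then `A` is local with principal maximal ideal, and
`A ≅ k[t]/(t^m)`. -/
theorem stmt_1 (k : Type*) [Field k] (d m : ℕ) (hd : 1 ≤ d) (hm : 1 ≤ m)
    (A : Subalgebra k (Polynomial k ⧸ Ideal.span {(Polynomial.X : Polynomial k) ^ (d * m)}))
    (hfree : Module.Free A (Polynomial k ⧸ Ideal.span {(Polynomial.X : Polynomial k) ^ (d * m)}))
    (hrank : Module.finrank A
      (Polynomial k ⧸ Ideal.span {(Polynomial.X : Polynomial k) ^ (d * m)}) = d) :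
    IsLocalRing A ∧ (∀ I : Ideal A, I.IsMaximal → I.IsPrincipal) ∧
      Nonempty (A ≃ₐ[k] (Polynomial k ⧸ Ideal.span {(Polynomial.X : Polynomial k) ^ m})) := by
  obtain ⟨a, ha, ha'⟩ := exists_pow_eq_zero_pow_pred_ne_zero A (by omega) (by omega) hrank
  let e : TruncatedPolynomial k m ≃ₐ[k] A :=
    algEquivOfPowEqZero (finrank_subalgebra A (by omega) (by omega) hrank) ha ha'
  have := isLocalRing (k := k) (n := m) (by omega)
  exact ⟨e.toRingEquiv.isLocalRing,
    fun I _ => (IsPrincipalIdealRing.of_surjective _ e.surjective).principal I, ⟨e.symm⟩⟩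
end

section
/- Let $k$ be a field of characteristic not dividing relevant exponents, $m \geq 1$, and let $\phi: k[t]/(t^m) \to k[t]/(t^{dm})$ be a $k$-algebra homomorphism making $k[t]/(t^{dm})$ a free module of rank $d$ over $k[t]/(t^m)$. Then $\phi(t) = t^d p(t)$ for some $p(t) \in k[t]/(t^{dm})$ with $p(0) \neq 0$ (i.e., $\phi(t)$ has $t$-adic valuation exactly $d$). -/
/-!
Write `x` and `t` for the classes of `X` in `A = k[X]/(X^m)` and `B = k[X]/(X^{dm})`.
Since `x^m = 0`, also `φ(x)^m = 0`, i.e. `X^{dm} ∣ g^m` for a lift `g` of `φ(x)`; hence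
`X^d ∣ g`. If moreover `t^{d+1} ∣ φ(x)`, then `φ(x)` vanishes in the quotient `k[X]/(X^{d+1})`
of `B`, so, because `A = k + xA`, the images of the `d` vectors of an `A`-basis of `B` span
this quotient over `k`, although it has dimension `d + 1`. This needs `d + 1 ≤ dm`; when
`m = 1`, `φ(x) = 0 = t^d` and `p = 1` works.
-/

open Polynomial

section FreeRank

variable {k A B C : Type*} [Field k] [CommRing A] [Nontrivial A] [CommRing B] [Ring C]
  [Algebra k A] [Algebra k B] [Algebra k C] [Algebra A B] [IsScalarTower k A B]
  [Module.Free A B] [Module.Finite A B]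

theorem finrank_le_finrank_of_surjective_of_map_ideal_eq_zero (I : Ideal A)
    (hI : ∀ a : A, ∃ c : k, a - algebraMap k A c ∈ I) (ψ : B →ₐ[k] C)
    (hψ : Function.Surjective ψ) (hψI : ∀ y ∈ I, ψ (algebraMap A B y) = 0) :
    Module.finrank k C ≤ Module.finrank A B := by
  let b := Module.Free.chooseBasis A B
  rw [Module.finrank_eq_card_chooseBasisIndex A B]
  refine finrank_le_of_span_eq_top (v := fun i => ψ (b i)) (eq_top_iff.mpr ?_)
  rintro w -
  obtain ⟨z, rfl⟩ := hψ w
  rw [← b.sum_repr z, map_sum]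
  refine Submodule.sum_mem _ fun i _ => ?_
  obtain ⟨c, hc⟩ := hI (b.repr z i)
  have hcoeff : ψ (b.repr z i • b i) = c • ψ (b i) := by
    rw [← sub_add_cancel (b.repr z i) (algebraMap k A c), add_smul, map_add, Algebra.smul_def,
      map_mul, hψI _ hc, zero_mul, zero_add, algebraMap_smul, map_smul]
  rw [hcoeff]
  exact Submodule.smul_mem _ _ (Submodule.subset_span ⟨i, rfl⟩)

end FreeRank

theorem Polynomial.exists_sub_algebraMap_mem_span_mk_X {R : Type*} [CommRing R]
    (J : Ideal R[X]) (a : R[X] ⧸ J) :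
    ∃ c : R, a - algebraMap R _ c ∈ Ideal.span {Ideal.Quotient.mk J X} := by
  obtain ⟨f, rfl⟩ := Ideal.Quotient.mk_surjective a
  obtain ⟨g, hg⟩ := X_dvd_sub_C (p := f)
  refine ⟨f.coeff 0, Ideal.mem_span_singleton'.mpr ⟨Ideal.Quotient.mk J g, ?_⟩⟩
  rw [← Ideal.Quotient.mk_algebraMap, algebraMap_eq, ← map_mul, ← map_sub, hg, mul_comm]

section Truncated

variable {k : Type*} [Field k]

local notation "𝕋" n:max => k[X] ⧸ Ideal.span {(X : k[X]) ^ n}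
local notation "τ" n:max => Ideal.Quotient.mk (Ideal.span {(X : k[X]) ^ n}) X

theorem Polynomial.finrank_quotient_span_X_pow (n : ℕ) : Module.finrank k (𝕋 n) = n := by
  rw [finrank_quotient_span_eq_natDegree, natDegree_X_pow]

theorem Polynomial.nontrivial_quotient_span_X_pow {n : ℕ} (hn : n ≠ 0) : Nontrivial (𝕋 n) :=
  Module.nontrivial_of_finrank_pos (R := k) (by rw [finrank_quotient_span_X_pow]; omega)

theorem Polynomial.finite_quotient_span_X_pow {n : ℕ} (hn : n ≠ 0) :
    Module.Finite k (𝕋 n) :=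
  Module.finite_of_finrank_pos (by rw [finrank_quotient_span_X_pow]; omega)

theorem Polynomial.mk_X_pow_eq_zero {n j : ℕ} (h : n ≤ j) : τ n ^ j = 0 := by
  rw [← map_pow, Ideal.Quotient.eq_zero_iff_mem]
  exact Ideal.mem_span_singleton.mpr (pow_dvd_pow X h)

theorem Polynomial.exists_eq_mk_X_pow_mul_of_pow_eq_zero {d m : ℕ} (hm : m ≠ 0)
    {y : 𝕋 (d * m)} (hy : y ^ m = 0) :
    ∃ q, y = τ (d * m) ^ d * q := by
  obtain ⟨g, rfl⟩ := Ideal.Quotient.mk_surjective y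
  have hdvd : (X ^ d) ^ m ∣ g ^ m := by
    rw [← pow_mul, ← Ideal.mem_span_singleton, ← Ideal.Quotient.eq_zero_iff_mem, map_pow, hy]
  obtain ⟨q, rfl⟩ := (UniqueFactorizationMonoid.pow_dvd_pow_iff_dvd hm).mp hdvd
  exact ⟨Ideal.Quotient.mk _ q, by rw [map_mul, map_pow]⟩

theorem Polynomial.one_notMem_span_mk_X {n : ℕ} (hn : n ≠ 0) : 1 ∉ Ideal.span {τ n} := by
  intro h
  have := nontrivial_quotient_span_X_pow (k := k) hn
  exact not_isUnit_zero (mk_X_pow_eq_zero (k := k) le_rfl ▸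
    (isUnit_of_dvd_one (Ideal.mem_span_singleton.mp h)).pow n)

theorem Polynomial.algebraMap_mk_X_notMem_span_mk_X_pow {m n d : ℕ} (hm : m ≠ 0)
    [Algebra (𝕋 m) (𝕋 n)] [IsScalarTower k (𝕋 m) (𝕋 n)]
    [Module.Free (𝕋 m) (𝕋 n)] [Module.Finite (𝕋 m) (𝕋 n)]
    (hrank : Module.finrank (𝕋 m) (𝕋 n) = d) (hdn : d < n) :
    algebraMap (𝕋 m) (𝕋 n) (τ m) ∉ Ideal.span {τ n ^ (d + 1)} := fun h => by
  have := nontrivial_quotient_span_X_pow (k := k) hm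
  have hle : Ideal.span {(X : k[X]) ^ n} ≤ Ideal.span {X ^ (d + 1)} :=
    Ideal.span_singleton_le_span_singleton.mpr (pow_dvd_pow X hdn)
  have hX : Ideal.Quotient.factorₐ k hle (algebraMap (𝕋 m) (𝕋 n) (τ m)) = 0 := by
    obtain ⟨r, hr⟩ := Ideal.mem_span_singleton'.mp h
    rw [← hr, map_mul, map_pow, Ideal.Quotient.factorₐ_apply_mk, mk_X_pow_eq_zero le_rfl,
      mul_zero]
  have hle' := finrank_le_finrank_of_surjective_of_map_ideal_eq_zero
    (Ideal.span {τ m}) (exists_sub_algebraMap_mem_span_mk_X _)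
    (Ideal.Quotient.factorₐ k hle) (Ideal.Quotient.factor_surjective hle) fun y hy => by
      obtain ⟨a, rfl⟩ := Ideal.mem_span_singleton'.mp hy
      rw [map_mul, map_mul, hX, mul_zero]
  rw [hrank, finrank_quotient_span_X_pow] at hle'
  omega

end Truncated

/-- If `φ : k[t]/(t^m) → k[t]/(t^{dm})` is a `k`-algebra map making the target
a free module of rank `d` over the source, then `φ(t) = t^d p(t)` with `p(0) ≠ 0`, i.e.
`φ(t)` has `t`-adic valuation exactly `d`. -/
theorem stmt_2 (k : Type*) [Field k] (d m : ℕ) (hd : 1 ≤ d) (hm : 1 ≤ m)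
    (φ : (Polynomial k ⧸ Ideal.span {(Polynomial.X : Polynomial k) ^ m}) →ₐ[k]
      (Polynomial k ⧸ Ideal.span {(Polynomial.X : Polynomial k) ^ (d * m)}))
    (hfree : letI := φ.toRingHom.toAlgebra; Module.Free
      (Polynomial k ⧸ Ideal.span {(Polynomial.X : Polynomial k) ^ m})
      (Polynomial k ⧸ Ideal.span {(Polynomial.X : Polynomial k) ^ (d * m)}))
    (hrank : letI := φ.toRingHom.toAlgebra; Module.finrank
      (Polynomial k ⧸ Ideal.span {(Polynomial.X : Polynomial k) ^ m})
      (Polynomial k ⧸ Ideal.span {(Polynomial.X : Polynomial k) ^ (d * m)}) = d) :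
    ∃ p : Polynomial k ⧸ Ideal.span {(Polynomial.X : Polynomial k) ^ (d * m)},
      φ (Ideal.Quotient.mk _ Polynomial.X) = (Ideal.Quotient.mk _ Polynomial.X) ^ d * p ∧
      p ∉ Ideal.span {((Ideal.Quotient.mk (Ideal.span {(Polynomial.X : Polynomial k) ^ (d * m)}))
        Polynomial.X)} := by
  have hdm : d * m ≠ 0 := by positivity
  obtain ⟨q, hq⟩ := exists_eq_mk_X_pow_mul_of_pow_eq_zero (d := d) (by omega)
    (y := φ (Ideal.Quotient.mk _ X)) (by rw [← map_pow, mk_X_pow_eq_zero le_rfl, map_zero])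
  rcases hm.eq_or_lt with rfl | hm
  · refine ⟨1, ?_, one_notMem_span_mk_X hdm⟩
    rw [mk_X_pow_eq_zero (by omega), zero_mul, ← pow_one (Ideal.Quotient.mk _ X),
      mk_X_pow_eq_zero le_rfl, map_zero]
  refine ⟨q, hq, fun hqt => ?_⟩
  let := φ.toRingHom.toAlgebra
  have : IsScalarTower k _ _ := IsScalarTower.of_algebraMap_eq' φ.comp_algebraMap.symm
  have := finite_quotient_span_X_pow (k := k) hdm
  have : Module.Finite _ _ := Module.Finite.of_restrictScalars_finite k
    (k[X] ⧸ Ideal.span {(X : k[X]) ^ m}) (k[X] ⧸ Ideal.span {(X : k[X]) ^ (d * m)})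
  refine algebraMap_mk_X_notMem_span_mk_X_pow (by omega) hrank (by nlinarith) ?_
  obtain ⟨r, rfl⟩ := Ideal.mem_span_singleton'.mp hqt
  exact Ideal.mem_span_singleton'.mpr ⟨r, by
    rw [RingHom.algebraMap_toAlgebra, AlgHom.toRingHom_eq_coe, RingHom.coe_coe, hq]; ring⟩
end

section
/- Let $R$ be a commutative ring, $A \supseteq I$ an $R$-algebra with ideal $I$, and $B$ an $R$-algebra with an injective $R$-algebra map $B \to A/I$ making $A/I$ a faithfully flat $B$-module. If $A$, $A/I$, and $B$ are all flat as $R$-modules, then the fiber product $B \times_{A/I} A$ is flat as an $R$-module. -/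
/-!
The fiber product `B ×_{A/I} A` is the kernel of `(b, a) ↦ g b - [a]`, a map from `B × A` onto
`A/I`, surjective because `A → A/I` is. With `B × A` and `A/I` flat, the kernel is flat: the
sequence `0 → K → B × A → A/I → 0` has flat cokernel, so it stays injective after tensoring with
an ideal `J`; the injective composite `J ⊗ K → J ⊗ (B × A) → R ⊗ (B × A)` factors through
`J ⊗ K → R ⊗ K`, which is therefore injective.
-/

open TensorProduct LinearMap

theorem TensorProduct.prodRight_comp_rTensor {R M M' N P : Type*} [CommRing R]
    [AddCommGroup M] [AddCommGroup M'] [AddCommGroup N] [AddCommGroup P]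
    [Module R M] [Module R M'] [Module R N] [Module R P] (f : M →ₗ[R] M') :
    (prodRight R R M' N P).toLinearMap ∘ₗ f.rTensor (N × P) =
      (f.rTensor N).prodMap (f.rTensor P) ∘ₗ (prodRight R R M N P).toLinearMap := by
  ext <;> simp

namespace Module.Flat

variable {R M N P : Type*} [CommRing R] [AddCommGroup M] [AddCommGroup N] [AddCommGroup P]
  [Module R M] [Module R N] [Module R P]

instance prod [Flat R M] [Flat R N] : Flat R (M × N) := by
  refine iff_rTensor_injective'.mpr fun I ↦ ?_
  have hcomp := congrArg DFunLike.coe (prodRight_comp_rTensor (N := M) (P := N) I.subtype)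
  simp only [coe_comp, LinearEquiv.coe_coe, coe_prodMap] at hcomp
  rw [← (prodRight R R R M N).injective.of_comp_iff, hcomp]
  exact ((iff_rTensor_injective'.mp ‹_› I).prodMap (iff_rTensor_injective'.mp ‹_› I)).comp
    (prodRight R R I M N).injective

theorem ker_of_surjective [Flat R M] [Flat R N] (p : M →ₗ[R] N) (hp : Function.Surjective p) :
    Flat R (ker p) := by
  refine iff_rTensor_injective'.mpr fun J ↦ ?_
  let i := (ker p).subtype
  have hlTensor : Function.Injective (i.lTensor J) :=
    lTensor_injective_of_exact_of_flat p hp i (ker p).injective_subtype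
      (exact_subtype_ker_map p) J
  have hsquare : i.lTensor R ∘ₗ J.subtype.rTensor (ker p) = J.subtype.rTensor M ∘ₗ i.lTensor J :=
    (lTensor_comp_rTensor _ _ _).trans (rTensor_comp_lTensor _ _ _).symm
  refine Function.Injective.of_comp (f := i.lTensor R) ?_
  rw [← coe_comp, hsquare, coe_comp]
  exact (iff_rTensor_injective'.mp ‹_› J).comp hlTensor

theorem eqLocus_comp_fst_comp_snd [Flat R M] [Flat R N] [Flat R P] (f : M →ₗ[R] P)
    (q : N →ₗ[R] P) (hq : Function.Surjective q) :
    Flat R (eqLocus (f ∘ₗ fst R M N) (q ∘ₗ snd R M N)) := by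
  rw [eqLocus_eq_ker_sub]
  refine ker_of_surjective _ fun x ↦ ?_
  obtain ⟨n, hn⟩ := hq (-x)
  exact ⟨(0, n), by simp [hn]⟩

end Module.Flat

theorem stmt_3_general (R : Type*) [CommRing R] (A B : Type*) [CommRing A] [CommRing B]
    [Algebra R A] [Algebra R B] (I : Ideal A)
    (g : B →ₐ[R] (A ⧸ I))
    (hA : Module.Flat R A) (hAI : Module.Flat R (A ⧸ I)) (hB : Module.Flat R B) :
    Module.Flat R
      (AlgHom.equalizer (g.comp (AlgHom.fst R B A))
        ((Ideal.Quotient.mkₐ R I).comp (AlgHom.snd R B A))) := by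
  have hflat := Module.Flat.eqLocus_comp_fst_comp_snd g.toLinearMap
    (Ideal.Quotient.mkₐ R I).toLinearMap Ideal.Quotient.mk_surjective
  exact (Module.Flat.equiv_iff (LinearEquiv.ofEq _ _ AlgHom.equalizer_toSubmodule)).mpr hflat

/-- If `A`, `A/I`, `B` are flat `R`-modules and `B → A/I` is an injective
`R`-algebra map making `A/I` a faithfully flat `B`-module, then the fiber product
`B ×_{A/I} A` is a flat `R`-module. -/
theorem stmt_3 (R : Type*) [CommRing R] (A B : Type*) [CommRing A] [CommRing B]
    [Algebra R A] [Algebra R B] (I : Ideal A)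
    (g : B →ₐ[R] (A ⧸ I)) (hg : Function.Injective g)
    (hff : letI := g.toRingHom.toAlgebra; Module.FaithfullyFlat B (A ⧸ I))
    (hA : Module.Flat R A) (hAI : Module.Flat R (A ⧸ I)) (hB : Module.Flat R B) :
    Module.Flat R
      (AlgHom.equalizer (g.comp (AlgHom.fst R B A))
        ((Ideal.Quotient.mkₐ R I).comp (AlgHom.snd R B A))) :=
  stmt_3_general R A B I g hA hAI hB
end

section
/- Let $k$ be a field with $\mathrm{char}(k) \neq 2$ and let $C = k[[x,y]]/(y^2 - x^4)$. Then $C$ is isomorphic to the subring of $k[[t]] \times k[[t]]$ consisting of pairs $(p(t), q(t))$ with $p(0) = q(0)$ and $p'(0) = q'(0)$ (power series agreeing up to degree 1). -/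
/-!
The two branches `y = ±x²` of the tacnode are parametrized by `t ↦ (t, s t²)` with `s = ±1`.
Since `y² ≡ x⁴`, every series is congruent modulo `y² - x⁴` to some `A(x) + y B(x)`, which the
branches send to `A ± t² B`. When `2` is invertible, `A` and `B` are recovered from the two images
as half their sum and half their difference divided by `t²`; this gives both injectivity on the
quotient and surjectivity onto pairs agreeing to first order.
-/

set_option synthInstance.maxHeartbeats 1000000
set_option maxHeartbeats 1000000

/-- The subalgebra of `k[[t]] × k[[t]]` of pairs of power series that agree modulo `t^m`,
i.e. agree up to degree `m - 1`. -/
def pairsAgreeing (k : Type*) [CommRing k] (m : ℕ) :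
    Subalgebra k (PowerSeries k × PowerSeries k) where
  carrier := {x | x.1 - x.2 ∈ Ideal.span {(PowerSeries.X : PowerSeries k) ^ m}}
  mul_mem' := by
    intro a b ha hb
    simp only [Set.mem_setOf_eq] at *
    have h : (a * b).1 - (a * b).2 = a.1 * (b.1 - b.2) + (a.1 - a.2) * b.2 := by
      simp only [Prod.fst_mul, Prod.snd_mul]; ring
    rw [h]
    exact Ideal.add_mem _ (Ideal.mul_mem_left _ _ hb) (Ideal.mul_mem_right _ _ ha)
  one_mem' := by simp
  add_mem' := by
    intro a b ha hb
    simp only [Set.mem_setOf_eq] at *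
    have h : (a + b).1 - (a + b).2 = (a.1 - a.2) + (b.1 - b.2) := by
      simp only [Prod.fst_add, Prod.snd_add]; ring
    rw [h]
    exact Ideal.add_mem _ ha hb
  zero_mem' := by simp
  algebraMap_mem' := by intro c; simp

open MvPowerSeries Finsupp

theorem MvPowerSeries.coeff_X_pow_mul {σ R : Type*} [CommSemiring R] [DecidableEq σ]
    (φ : MvPowerSeries σ R) (e : σ →₀ ℕ) (i : σ) (n : ℕ) :
    coeff e (X i ^ n * φ) = if n ≤ e i then coeff (e - single i n) φ else 0 := by
  simp only [X_pow_eq, coeff_monomial_mul, single_le_iff, one_mul]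

noncomputable section

namespace Tacnode

section CommRing

variable {k : Type*} [CommRing k]

theorem hasSubst_branch (s : k) :
    HasSubst ![PowerSeries.X, PowerSeries.C s * PowerSeries.X ^ 2] :=
  hasSubst_of_constantCoeff_zero fun i => by
    fin_cases i <;> simp [← PowerSeries.constantCoeff.eq_def]

def branch (s : k) : MvPowerSeries (Fin 2) k →ₐ[k] PowerSeries k :=
  substAlgHom (hasSubst_branch s)

theorem branch_X_zero (s : k) : branch s (X 0) = PowerSeries.X :=
  substAlgHom_X _ 0

theorem branch_X_one (s : k) : branch s (X 1) = PowerSeries.C s * PowerSeries.X ^ 2 :=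
  substAlgHom_X _ 1

theorem branch_subst_X_zero (s : k) (c : PowerSeries k) : branch s (c.subst (X 0)) = c := by
  rw [branch, substAlgHom_apply, PowerSeries.subst_def,
    subst_comp_subst_apply (PowerSeries.HasSubst.X 0).const (hasSubst_branch s),
    subst_X (hasSubst_branch s)]
  exact PowerSeries.X_subst c

theorem branch_tacnode {s : k} (hs : s ^ 2 = 1) :
    branch s (X 1 ^ 2 - X 0 ^ 4) = 0 := by
  rw [map_sub, map_pow, map_pow, branch_X_zero, branch_X_one, mul_pow, ← map_pow, hs, map_one]
  ring

/-- For `v < 2` this is the coefficient of `x^u y^v` in the normal form of `F` modulo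
`y² - x⁴`, and for `v ≥ 2` that of `x^u y^(v-2)` in the quotient: the monomial
`x^(u-4i) y^(v+2i)` of `F` is congruent to `x^u y^v`. -/
def reduceCoeff (F : MvPowerSeries (Fin 2) k) (u v : ℕ) : k :=
  ∑ i ∈ Finset.range (u / 4 + 1), coeff (single 0 (u - 4 * i) + single 1 (v + 2 * i)) F

theorem reduceCoeff_eq (F : MvPowerSeries (Fin 2) k) (u v : ℕ) :
    reduceCoeff F u v = coeff (single 0 u + single 1 v) F
      + if 4 ≤ u then reduceCoeff F (u - 4) (v + 2) else 0 := by
  unfold reduceCoeff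
  rw [Finset.sum_range_succ', add_comm]
  split_ifs with hu
  · obtain ⟨w, rfl⟩ := Nat.exists_eq_add_of_le hu
    simp only [show (4 + w) / 4 = w / 4 + 1 by omega, Nat.add_sub_cancel_left]
    congr 2 with i
    rw [show 4 + w - 4 * (i + 1) = w - 4 * i by omega,
      show v + 2 * (i + 1) = v + 2 + 2 * i by omega]
  · simp [show u / 4 = 0 by omega]

def quotient (F : MvPowerSeries (Fin 2) k) : MvPowerSeries (Fin 2) k :=
  fun e => reduceCoeff F (e 0) (e 1 + 2)

theorem coeff_quotient (F : MvPowerSeries (Fin 2) k) (e : Fin 2 →₀ ℕ) :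
    coeff e (quotient F) = reduceCoeff F (e 0) (e 1 + 2) := rfl

def evenRemainder (F : MvPowerSeries (Fin 2) k) : PowerSeries k :=
  PowerSeries.mk fun n => reduceCoeff F n 0

def oddRemainder (F : MvPowerSeries (Fin 2) k) : PowerSeries k :=
  PowerSeries.mk fun n => reduceCoeff F n 1

theorem eq_single_add_single (e : Fin 2 →₀ ℕ) : e = single 0 (e 0) + single 1 (e 1) := by
  ext i; fin_cases i <;> simp

def normalForm (A B : PowerSeries k) : MvPowerSeries (Fin 2) k :=
  A.subst (X 0) + X 1 * B.subst (X 0)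

theorem eq_mul_quotient_add_normalForm (F : MvPowerSeries (Fin 2) k) :
    F = (X 1 ^ 2 - X 0 ^ 4) * quotient F + normalForm (evenRemainder F) (oddRemainder F) := by
  ext e
  rw [eq_single_add_single e]
  generalize e 0 = u, e 1 = v
  rw [normalForm, sub_mul, map_add, map_add, map_sub, coeff_X_pow_mul, coeff_X_pow_mul,
    ← pow_one (X 1 : MvPowerSeries (Fin 2) k), coeff_X_pow_mul, PowerSeries.coeff_subst_single,
    PowerSeries.coeff_subst_single, eq_sub_of_add_eq (reduceCoeff_eq F u v).symm]
  simp only [coeff_quotient, evenRemainder, oddRemainder, PowerSeries.coeff_mk, Finsupp.ext_iff,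
    Fin.forall_fin_two]
  obtain _ | _ | v := v <;> simp <;> ring

theorem normalForm_zero : normalForm (0 : PowerSeries k) 0 = 0 := by
  rw [normalForm, ← PowerSeries.coe_substAlgHom (PowerSeries.HasSubst.X 0), map_zero, mul_zero,
    add_zero]

theorem branch_normalForm (s : k) (A B : PowerSeries k) :
    branch s (normalForm A B) = A + PowerSeries.C s * PowerSeries.X ^ 2 * B := by
  rw [normalForm, map_add, map_mul, branch_subst_X_zero, branch_subst_X_zero, branch_X_one]

theorem branch_eq {s : k} (hs : s ^ 2 = 1) (F : MvPowerSeries (Fin 2) k) :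
    branch s F = evenRemainder F + PowerSeries.C s * PowerSeries.X ^ 2 * oddRemainder F := by
  conv_lhs => rw [eq_mul_quotient_add_normalForm F]
  rw [map_add, map_mul, branch_tacnode hs, zero_mul, zero_add, branch_normalForm]

theorem branch_one_sub_branch_neg_one (F : MvPowerSeries (Fin 2) k) :
    branch 1 F - branch (-1) F = PowerSeries.X ^ 2 * (2 * oddRemainder F) := by
  rw [branch_eq (one_pow 2), branch_eq neg_one_sq]
  simp only [map_one, map_neg]
  ring

def branches : MvPowerSeries (Fin 2) k →ₐ[k] pairsAgreeing k 2 :=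
  ((branch 1).prod (branch (-1))).codRestrict _ fun F =>
    Ideal.mem_span_singleton.mpr ⟨_, branch_one_sub_branch_neg_one F⟩

theorem coe_branches (F : MvPowerSeries (Fin 2) k) :
    (branches F : PowerSeries k × PowerSeries k) = (branch 1 F, branch (-1) F) := rfl

end CommRing

section Field

variable {k : Type*} [Field k] (h2 : (2 : k) ≠ 0)
include h2

theorem isUnit_two : IsUnit (2 : PowerSeries k) := by
  rw [← map_ofNat PowerSeries.C 2]
  exact h2.isUnit.map _

theorem ker_branches : RingHom.ker (branches (k := k)) = Ideal.span {X 1 ^ 2 - X 0 ^ 4} := by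
  refine le_antisymm (fun F hF => ?_) (Ideal.span_le.mpr ?_)
  · obtain ⟨h₁, hneg⟩ := Prod.ext_iff.mp (congrArg Subtype.val (RingHom.mem_ker.mp hF))
    rw [coe_branches, branch_eq (one_pow 2)] at h₁
    rw [coe_branches, branch_eq neg_one_sq] at hneg
    simp only [map_one, map_neg, Prod.fst_zero, Prod.snd_zero, ZeroMemClass.coe_zero] at h₁ hneg
    have hA : evenRemainder F = 0 :=
      (isUnit_two h2).mul_right_eq_zero.mp (by linear_combination h₁ + hneg)
    have hB : oddRemainder F = 0 := by
      rw [hA, zero_add, one_mul] at h₁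
      exact (mul_eq_zero.mp h₁).resolve_left (pow_ne_zero 2 PowerSeries.X_ne_zero)
    rw [eq_mul_quotient_add_normalForm F, hA, hB, normalForm_zero, add_zero]
    exact Ideal.mul_mem_right _ _ (Ideal.mem_span_singleton_self _)
  · rw [Set.singleton_subset_iff, SetLike.mem_coe, RingHom.mem_ker]
    exact Subtype.ext (Prod.ext (branch_tacnode (one_pow 2)) (branch_tacnode neg_one_sq))

theorem branches_surjective : Function.Surjective (branches (k := k)) := by
  rintro ⟨⟨p, q⟩, hpq⟩
  obtain ⟨h, hh : p - q = PowerSeries.X ^ 2 * h⟩ := Ideal.mem_span_singleton.mp hpq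
  obtain ⟨u, hu⟩ := (isUnit_two h2).exists_left_inv
  refine ⟨normalForm (u * (p + q)) (u * h), Subtype.ext (Prod.ext ?_ ?_)⟩
  · simp only [coe_branches, branch_normalForm, map_one, one_mul]
    linear_combination p * hu - u * hh
  · simp only [coe_branches, branch_normalForm, map_neg, map_one]
    linear_combination q * hu + u * hh

end Field

end Tacnode

end

/-- for `char k ≠ 2`, the tacnode algebra `k[[x,y]]/(y² - x⁴)` is isomorphic
to the subring of `k[[t]] × k[[t]]` of pairs of power series agreeing up to degree 1. -/
theorem stmt_8 (k : Type*) [Field k] (hchar : (2 : k) ≠ 0) :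
    Nonempty ((MvPowerSeries (Fin 2) k ⧸
        Ideal.span {(MvPowerSeries.X 1 : MvPowerSeries (Fin 2) k) ^ 2 -
          (MvPowerSeries.X 0) ^ 4}) ≃ₐ[k] pairsAgreeing k 2) :=
  ⟨(Ideal.quotientEquivAlgOfEq k (Tacnode.ker_branches hchar).symm).trans
    (Ideal.quotientKerAlgEquivOfSurjective (Tacnode.branches_surjective hchar))⟩
end

section
/- Let $k$ be a field with $\mathrm{char}(k) \neq 2$. Identify $B = k[[x,y]]/(y^2-x^4)$ with the subalgebra of $k[[t]]\times k[[t]]$ of pairs agreeing up to degree 1. Then the subset $A \subseteq B$ of pairs of the form $(p(t), p(0))$ with $p'(0) = 0$ is a $k$-subalgebra, and $A$ is isomorphic to $k[[x,y]]/(y^2 - x^3)$ (a cusp, i.e. an $A_2$-singularity), via the map sending $x \mapsto \frac{y+x^2}{2}$ and $y \mapsto \frac{x(y+x^2)}{2}$ in $B$. -/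
/-!
The substitution `x ↦ t^2`, `y ↦ t^3` is an algebra map `k[[x,y]] → k[[t]]` killing
`y^2 - x^3`. Modulo `y^2 - x^3` every series reduces to one of the form `f₀(x) + y f₁(x)`,
which maps to `f₀(t^2) + t^3 f₁(t^2)`. The monomials `x^a` and `x^a y` go to `t^(2a)` and
`t^(2a+3)`, which hit every exponent except `1` exactly once; so the substitution identifies
`k[[x,y]]/(y^2 - x^3)` with the series without linear term, and pairing such a series `p`
with `p(0)` lands exactly in `cuspInTacnode k`.
-/

/-- The subalgebra of `k[[t]] × k[[t]]` of pairs of the form `(p(t), p(0))` with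
`p'(0) = 0` (sitting inside the tacnode algebra of pairs agreeing up to degree 1). -/
def cuspInTacnode (k : Type*) [CommRing k] :
    Subalgebra k (PowerSeries k × PowerSeries k) where
  carrier := {x | x.2 = PowerSeries.C (PowerSeries.constantCoeff x.1) ∧
    PowerSeries.coeff 1 x.1 = 0}
  mul_mem' := by
    rintro a b ⟨ha1, ha2⟩ ⟨hb1, hb2⟩
    constructor
    · simp only [Prod.snd_mul, Prod.fst_mul, ha1, hb1, map_mul]
    · simp only [Prod.fst_mul, PowerSeries.coeff_one_mul, ha2, hb2, zero_mul, add_zero]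
  one_mem' := by simp
  add_mem' := by
    rintro a b ⟨ha1, ha2⟩ ⟨hb1, hb2⟩
    constructor
    · simp only [Prod.snd_add, Prod.fst_add, ha1, hb1, map_add]
    · simp only [Prod.fst_add, map_add, ha2, hb2, add_zero]
  zero_mem' := by simp
  algebraMap_mem' := by
    intro c
    refine ⟨?_, ?_⟩ <;> simp [PowerSeries.algebraMap_apply]

namespace Cusp

open MvPowerSeries Finset

variable {k : Type*} [CommRing k]

noncomputable def expXY (a b : ℕ) : Fin 2 →₀ ℕ := Finsupp.single 0 a + Finsupp.single 1 b

@[simp] lemma expXY_apply_zero (a b : ℕ) : expXY a b 0 = a := by simp [expXY]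

@[simp] lemma expXY_apply_one (a b : ℕ) : expXY a b 1 = b := by simp [expXY]

lemma eq_expXY (d : Fin 2 →₀ ℕ) : d = expXY (d 0) (d 1) := by
  ext i; fin_cases i <;> simp

lemma expXY_sub_single_one (a b : ℕ) : expXY a (b + 2) - Finsupp.single 1 2 = expXY a b := by
  ext i; fin_cases i <;> simp [expXY]

lemma expXY_sub_single_zero (a b : ℕ) : expXY a b - Finsupp.single 0 3 = expXY (a - 3) b := by
  ext i; fin_cases i <;> simp [expXY]

lemma single_zero_le_expXY {a b n : ℕ} : Finsupp.single 0 n ≤ expXY a b ↔ n ≤ a := by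
  simp [Finsupp.single_le_iff]

lemma single_one_le_expXY {a b n : ℕ} : Finsupp.single 1 n ≤ expXY a b ↔ n ≤ b := by
  simp [Finsupp.single_le_iff]

lemma coeff_mul_X_one_sq_sub_X_zero_cube (g : MvPowerSeries (Fin 2) k) (a b : ℕ) :
    coeff (expXY a (b + 2)) (g * (X 1 ^ 2 - X 0 ^ 3)) =
      coeff (expXY a b) g - if 3 ≤ a then coeff (expXY (a - 3) (b + 2)) g else 0 := by
  classical
  rw [mul_sub, map_sub, X_pow_eq, X_pow_eq, coeff_mul_monomial, coeff_mul_monomial,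
    if_pos (single_one_le_expXY.2 (Nat.le_add_left 2 b)), expXY_sub_single_one]
  simp only [single_zero_le_expXY, expXY_sub_single_zero, mul_one]

def IsLinearInY (f : MvPowerSeries (Fin 2) k) : Prop :=
  ∀ d : Fin 2 →₀ ℕ, 2 ≤ d 1 → coeff d f = 0

/-- Reducing `x^a y^(b+2)` by `y^2 = x^3` as far as possible passes through the exponents
`(a - 3i, b + 2 + 2i)`; collecting them gives a quotient whose product with `y^2 - x^3`
telescopes. -/
noncomputable def divByRelation (f : MvPowerSeries (Fin 2) k) : MvPowerSeries (Fin 2) k :=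
  fun d => ∑ i ∈ range (d 0 / 3 + 1), coeff (expXY (d 0 - 3 * i) (d 1 + 2 + 2 * i)) f

lemma coeff_divByRelation (f : MvPowerSeries (Fin 2) k) (a b : ℕ) :
    coeff (expXY a b) (divByRelation f) =
      ∑ i ∈ range (a / 3 + 1), coeff (expXY (a - 3 * i) (b + 2 + 2 * i)) f := by
  simp [divByRelation, coeff_apply]

lemma coeff_divByRelation_eq_add (f : MvPowerSeries (Fin 2) k) (a b : ℕ) :
    coeff (expXY a b) (divByRelation f) = coeff (expXY a (b + 2)) f +
      if 3 ≤ a then coeff (expXY (a - 3) (b + 2)) (divByRelation f) else 0 := by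
  rw [coeff_divByRelation, sum_range_succ', add_comm, mul_zero, Nat.sub_zero, mul_zero, add_zero]
  congr 1
  split_ifs with ha
  · obtain ⟨c, rfl⟩ := Nat.exists_eq_add_of_le ha
    rw [coeff_divByRelation, Nat.add_sub_cancel_left, show (3 + c) / 3 = c / 3 + 1 by omega]
    refine sum_congr rfl fun i _ => congrArg (coeff · f) ?_
    congr 1 <;> omega
  · simp [Nat.div_eq_of_lt (not_le.1 ha)]

theorem exists_isLinearInY_sub_mul (f : MvPowerSeries (Fin 2) k) :
    ∃ q, IsLinearInY (f - q * (X 1 ^ 2 - X 0 ^ 3)) := by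
  refine ⟨divByRelation f, fun d hd => ?_⟩
  obtain ⟨b, hb⟩ := Nat.exists_eq_add_of_le' hd
  rw [eq_expXY d, hb, map_sub, coeff_mul_X_one_sq_sub_X_zero_cube, coeff_divByRelation_eq_add]
  ring

lemma hasSubst_X_sq_X_cube :
    HasSubst ![(PowerSeries.X ^ 2 : PowerSeries k), PowerSeries.X ^ 3] :=
  hasSubst_of_constantCoeff_zero fun i => by
    fin_cases i <;> simp [← PowerSeries.constantCoeff.eq_def]

noncomputable def param : MvPowerSeries (Fin 2) k →ₐ[k] PowerSeries k :=
  substAlgHom hasSubst_X_sq_X_cube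

lemma param_X_zero : param (X 0 : MvPowerSeries (Fin 2) k) = PowerSeries.X ^ 2 :=
  substAlgHom_X _ 0

lemma param_X_one : param (X 1 : MvPowerSeries (Fin 2) k) = PowerSeries.X ^ 3 :=
  substAlgHom_X _ 1

lemma param_X_one_sq_sub_X_zero_cube : param (X 1 ^ 2 - X 0 ^ 3 : MvPowerSeries (Fin 2) k) = 0 := by
  rw [map_sub, map_pow, map_pow, param_X_zero, param_X_one, ← pow_mul, ← pow_mul,
    sub_self]

lemma coeff_param (f : MvPowerSeries (Fin 2) k) (n : ℕ) :
    PowerSeries.coeff n (param f) =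
      ∑ᶠ d : Fin 2 →₀ ℕ, if n = 2 * d 0 + 3 * d 1 then coeff d f else 0 := by
  rw [param, substAlgHom_apply, PowerSeries.coeff_def (s := Finsupp.single () n) (by simp),
    coeff_subst hasSubst_X_sq_X_cube]
  congr 1; ext d
  simp only [Finsupp.prod_fintype _ _ fun _ => pow_zero _, Fin.prod_univ_two]
  simp [← pow_mul, ← pow_add]

lemma coeff_param_eq_coeff (f : MvPowerSeries (Fin 2) k) {n : ℕ} (d : Fin 2 →₀ ℕ)
    (h : ∀ e ≠ d, n = 2 * e 0 + 3 * e 1 → coeff e f = 0) :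
    PowerSeries.coeff n (param f) = if n = 2 * d 0 + 3 * d 1 then coeff d f else 0 := by
  rw [coeff_param, finsum_eq_single _ d fun e he => ite_eq_right_iff.2 (h e he)]

lemma coeff_one_param (f : MvPowerSeries (Fin 2) k) : PowerSeries.coeff 1 (param f) = 0 := by
  rw [coeff_param, finsum_eq_zero_of_forall_eq_zero fun d => if_neg (by omega)]

namespace IsLinearInY

variable {f : MvPowerSeries (Fin 2) k} (hf : IsLinearInY f)
include hf

lemma coeff_param_two_mul (a : ℕ) :
    PowerSeries.coeff (2 * a) (param f) = coeff (expXY a 0) f := by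
  rw [coeff_param_eq_coeff f (expXY a 0), if_pos (by simp)]
  intro e he hn
  refine hf e (by_contra fun h => he ?_)
  rw [eq_expXY e]; congr 1 <;> omega

lemma coeff_param_two_mul_add_three (a : ℕ) :
    PowerSeries.coeff (2 * a + 3) (param f) = coeff (expXY a 1) f := by
  rw [coeff_param_eq_coeff f (expXY a 1), if_pos (by simp)]
  intro e he hn
  refine hf e (by_contra fun h => he ?_)
  rw [eq_expXY e]; congr 1 <;> omega

lemma eq_zero_of_param_eq_zero (h : param f = 0) : f = 0 := by
  ext d
  rw [MvPowerSeries.coeff_zero, eq_expXY d]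
  obtain hd | hd | hd : d 1 = 0 ∨ d 1 = 1 ∨ 2 ≤ d 1 := by omega
  · rw [hd, ← hf.coeff_param_two_mul, h, map_zero]
  · rw [hd, ← hf.coeff_param_two_mul_add_three, h, map_zero]
  · exact hf _ (by simpa using hd)

end IsLinearInY

theorem ker_param :
    RingHom.ker (param (k := k)) = Ideal.span {X 1 ^ 2 - X 0 ^ 3} := by
  refine le_antisymm (fun f hf => ?_) ?_
  · obtain ⟨q, hq⟩ := exists_isLinearInY_sub_mul f
    have hr : param (f - q * (X 1 ^ 2 - X 0 ^ 3)) = 0 := by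
      rw [map_sub, map_mul, param_X_one_sq_sub_X_zero_cube, mul_zero, sub_zero,
        RingHom.mem_ker.1 hf]
    exact Ideal.mem_span_singleton'.2 ⟨q, (sub_eq_zero.1 (hq.eq_zero_of_param_eq_zero hr)).symm⟩
  · rw [Ideal.span_le, Set.singleton_subset_iff]
    exact param_X_one_sq_sub_X_zero_cube

noncomputable def lift (p : PowerSeries k) : MvPowerSeries (Fin 2) k :=
  fun d => if d 1 = 0 then PowerSeries.coeff (2 * d 0) p
    else if d 1 = 1 then PowerSeries.coeff (2 * d 0 + 3) p else 0

lemma isLinearInY_lift (p : PowerSeries k) : IsLinearInY (lift p) := fun d hd => by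
  simp only [lift, coeff_apply]
  rw [if_neg (by omega), if_neg (by omega)]

lemma param_lift {p : PowerSeries k} (hp : PowerSeries.coeff 1 p = 0) :
    param (lift p) = p := by
  ext n
  obtain ⟨a, rfl | rfl⟩ := Nat.even_or_odd' n
  · rw [(isLinearInY_lift p).coeff_param_two_mul]
    simp [lift, coeff_apply]
  · rcases a with _ | a
    · rw [coeff_one_param, hp]
    · rw [show 2 * (a + 1) + 1 = 2 * a + 3 by ring,
        (isLinearInY_lift p).coeff_param_two_mul_add_three]
      simp [lift, coeff_apply]

noncomputable def pairWithConstant : PowerSeries k →ₐ[k] PowerSeries k × PowerSeries k where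
  toRingHom := (RingHom.id _).prod (PowerSeries.C.comp PowerSeries.constantCoeff)
  commutes' c := by ext <;> simp

noncomputable def toCuspInTacnode : MvPowerSeries (Fin 2) k →ₐ[k] cuspInTacnode k :=
  (pairWithConstant.comp param).codRestrict _ fun f => ⟨rfl, coeff_one_param f⟩

lemma coe_toCuspInTacnode (f : MvPowerSeries (Fin 2) k) :
    (toCuspInTacnode f : PowerSeries k × PowerSeries k) =
      (param f, PowerSeries.C (PowerSeries.constantCoeff (param f))) :=
  rfl

lemma toCuspInTacnode_surjective : Function.Surjective (toCuspInTacnode (k := k)) := by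
  rintro ⟨⟨p, s⟩, hs, hp⟩
  refine ⟨lift p, Subtype.ext ?_⟩
  rw [coe_toCuspInTacnode, param_lift hp]
  exact Prod.ext rfl hs.symm

lemma ker_toCuspInTacnode : RingHom.ker (toCuspInTacnode (k := k)) = RingHom.ker param := by
  ext f
  simp only [RingHom.mem_ker, ← Subtype.val_inj, coe_toCuspInTacnode, ZeroMemClass.coe_zero,
    Prod.mk_eq_zero]
  exact ⟨And.left, fun h => ⟨h, by rw [h, map_zero, map_zero]⟩⟩

lemma fst_sub_snd_mem_span_X_sq {x : PowerSeries k × PowerSeries k} (hx : x ∈ cuspInTacnode k) :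
    x.1 - x.2 ∈ Ideal.span {PowerSeries.X ^ 2} := by
  obtain ⟨hs, hp⟩ := hx
  rw [Ideal.mem_span_singleton, PowerSeries.X_pow_dvd_iff]
  intro m hm
  interval_cases m <;> simp [hs, hp]

end Cusp

theorem stmt_9_general (k : Type*) [Field k] :
    (∀ x ∈ cuspInTacnode k,
      x.1 - x.2 ∈ Ideal.span {(PowerSeries.X : PowerSeries k) ^ 2}) ∧
    Nonempty ((MvPowerSeries (Fin 2) k ⧸
        Ideal.span {(MvPowerSeries.X 1 : MvPowerSeries (Fin 2) k) ^ 2 -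
          (MvPowerSeries.X 0) ^ 3}) ≃ₐ[k] cuspInTacnode k) := by
  refine ⟨fun x hx => Cusp.fst_sub_snd_mem_span_X_sq hx, ⟨?_⟩⟩
  rw [← Cusp.ker_param, ← Cusp.ker_toCuspInTacnode]
  exact Ideal.quotientKerAlgEquivOfSurjective Cusp.toCuspInTacnode_surjective

/-- inside the tacnode algebra `B` (pairs agreeing up to degree 1), the subset
of pairs `(p(t), p(0))` with `p'(0) = 0` is a `k`-subalgebra, contained in `B`, and it is
isomorphic to the cusp algebra `k[[x,y]]/(y² - x³)` (char `k ≠ 2`). -/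
theorem stmt_9 (k : Type*) [Field k] (hchar : (2 : k) ≠ 0) :
    (∀ x ∈ cuspInTacnode k,
      x.1 - x.2 ∈ Ideal.span {(PowerSeries.X : PowerSeries k) ^ 2}) ∧
    Nonempty ((MvPowerSeries (Fin 2) k ⧸
        Ideal.span {(MvPowerSeries.X 1 : MvPowerSeries (Fin 2) k) ^ 2 -
          (MvPowerSeries.X 0) ^ 3}) ≃ₐ[k] cuspInTacnode k) :=
  stmt_9_general k
end

section
/- Let $k$ be a field, $n \geq 2$, and let $B_\epsilon$ be a flat $k[\epsilon]/(\epsilon^2)$-algebra of the form $k[t,\epsilon]/(p(t,\epsilon))$ with $p(t,0) = t^n$, equipped with a section $q_\epsilon$ sending $t \mapsto b\epsilon$. If $p(b\epsilon, \epsilon) = p'(b\epsilon,\epsilon) = \dots = p^{(n-1)}(b\epsilon, \epsilon) = 0$ (derivatives in $t$ over $k[\epsilon]/(\epsilon^2)$), then $p(t,\epsilon) = (t - b\epsilon)^n$ in $k[t,\epsilon]/(\epsilon^2)$, and hence $(B_\epsilon, q_\epsilon)$ is isomorphic over $k[\epsilon]/(\epsilon^2)$ to the trivial deformation $(k[t,\epsilon]/(t^n),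 t \mapsto 0)$. -/
set_option synthInstance.maxHeartbeats 1000000
set_option maxHeartbeats 1000000

open Polynomial TrivSqZeroExt

section Aux
variable {k : Type*} [Field k]

lemma aux_eq_inr_snd (x : DualNumber k) (h : fst x = 0) : x = inr (snd x) := by
  have := inl_fst_add_inr_snd_eq x
  rw [h, inl_zero, zero_add] at this
  exact this.symm

lemma aux_inr_pow (b : k) (m : ℕ) (hm : 2 ≤ m) : (inr b : DualNumber k) ^ m = 0 := by
  obtain ⟨l, rfl⟩ := Nat.exists_eq_add_of_le hm
  rw [pow_add, pow_two, inr_mul_inr, zero_mul]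

lemma aux_eval_inr (q : Polynomial (DualNumber k)) (h : ∀ j, fst (q.coeff j) = 0) (b : k) :
    q.eval (inr b : DualNumber k) = q.coeff 0 := by
  rw [eval_eq_sum_range]
  refine (Finset.sum_eq_single_of_mem 0 (Finset.mem_range.mpr (Nat.succ_pos _)) ?_).trans
    (by simp)
  intro i _ hi
  obtain ⟨m, rfl⟩ := Nat.exists_eq_succ_of_ne_zero hi
  rw [aux_eq_inr_snd _ (h _), pow_succ', ← mul_assoc, inr_mul_inr, zero_mul]

lemma aux_kill (m : ℕ) (x : DualNumber k) (hm : (m : k) ≠ 0) (hx : fst x = 0)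
    (h0 : m • x = 0) : x = 0 := by
  rw [aux_eq_inr_snd x hx] at h0 ⊢
  have h1 : (inr (m • snd x) : DualNumber k) = 0 := by
    rw [← h0]; exact_mod_cast map_nsmul (TrivSqZeroExt.inrHom k k) m (snd x)
  have h2 : m • snd x = 0 := inr_injective (h1.trans (inr_zero k).symm)
  rw [nsmul_eq_mul] at h2
  rcases mul_eq_zero.mp h2 with h | h
  · exact absurd h hm
  · rw [h, inr_zero]

lemma aux_pow_expand (c : DualNumber k) (h : c * c = 0) (m : ℕ) :
    (X - C c) ^ (m + 1) =
      X ^ (m + 1) - ((m : ℕ) + 1 : Polynomial (DualNumber k)) * C c * X ^ m := by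
  have h0 : C c * C c = (0 : Polynomial (DualNumber k)) := by rw [← C_mul, h, C_0]
  induction m with
  | zero => simp
  | succ m ih =>
    have step : (X - C c) ^ (m + 1 + 1) = (X - C c) ^ (m + 1) * (X - C c) := by ring
    rw [step, ih]
    have expand :
        (X ^ (m + 1) - ((m : ℕ) + 1 : Polynomial (DualNumber k)) * C c * X ^ m) * (X - C c) =
          X ^ (m + 1 + 1) - (((m : ℕ) + 1) + 1 : Polynomial (DualNumber k)) * C c * X ^ (m + 1)
            + ((m : ℕ) + 1 : Polynomial (DualNumber k)) * (C c * C c) * X ^ m := by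
      push_cast
      ring
    rw [expand, h0]
    push_cast
    ring

end Aux

open Polynomial TrivSqZeroExt in
/-- first-order deformations inside the curvilinear locus are trivial.
If `p ∈ (k[ε]/(ε²))[t]` reduces to `tⁿ` mod `ε`, has `ε`-part of degree `< n`, and `p`
together with its first `n-1` `t`-derivatives vanish at `t = bε`, then `p = (t - bε)ⁿ`;
hence the coordinate change `t ↦ t + bε` (an automorphism of `k[ε][t]` fixing `k[ε]` and
moving the marked point `bε` to `0`) carries the ideal `(p)` to `(tⁿ)`, so
`(k[t,ε]/(p), t ↦ bε)` is isomorphic over `k[ε]` to the trivial deformation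
`(k[t,ε]/(tⁿ), t ↦ 0)`. -/
theorem stmt_16 (k : Type*) [Field k] (n : ℕ) (hn : 2 ≤ n)
    (hchar : ∀ q : ℕ, CharP k q → q = 0 ∨ n < q)
    (p : Polynomial (DualNumber k)) (b : k)
    (hp0 : p.map (TrivSqZeroExt.fstHom k k k).toRingHom = X ^ n)
    (hdeg : (p - X ^ n).degree < (n : WithBot ℕ))
    (hder : ∀ i : ℕ, i < n →
      (Polynomial.derivative^[i] p).eval (TrivSqZeroExt.inr b : DualNumber k) = 0) :
    p = (X - C (TrivSqZeroExt.inr b : DualNumber k)) ^ n ∧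
    Ideal.map
      (Polynomial.aeval (X + C (TrivSqZeroExt.inr b : DualNumber k)) :
        Polynomial (DualNumber k) →ₐ[DualNumber k] Polynomial (DualNumber k))
      (Ideal.span {p}) = Ideal.span {(X : Polynomial (DualNumber k)) ^ n} := by
  have hcc : (inr b : DualNumber k) * inr b = 0 := inr_mul_inr k b b
  set e : Polynomial (DualNumber k) := p - X ^ n with he
  have hpe : p = X ^ n + e := by rw [he]; ring
  have hemap : e.map (fstHom k k k).toRingHom = 0 := by
    rw [he, Polynomial.map_sub, hp0, Polynomial.map_pow, map_X, sub_self]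
  have hfst : ∀ j, fst (e.coeff j) = 0 := by
    intro j
    have := congrArg (fun q : Polynomial k => q.coeff j) hemap
    simpa [coeff_map] using this
  have hfst' : ∀ i j, fst ((derivative^[i] e).coeff j) = 0 := by
    intro i j
    rw [coeff_iterate_derivative, fst_smul, hfst, smul_zero]
  have hfac : ∀ i : ℕ, i ≤ n → ((Nat.factorial i : ℕ) : k) ≠ 0 := by
    intro i hi
    obtain ⟨q, hq⟩ := CharP.exists k
    rcases hchar q hq with h0 | hlt
    · subst h0
      haveI : CharZero k := CharP.charP_to_charZero k
      exact_mod_cast Nat.cast_ne_zero.mpr (Nat.factorial_ne_zero i)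
    · have hq0 : q ≠ 0 := by omega
      have hqp : q.Prime := (CharP.char_is_prime_or_zero k q).resolve_right hq0
      rw [Ne, CharP.cast_eq_zero_iff k q]
      intro hdvd
      have := (Nat.Prime.dvd_factorial hqp).mp hdvd
      omega
  have key : ∀ i, i < n →
      ((n.descFactorial i : ℕ) : DualNumber k) * (inr b : DualNumber k) ^ (n - i)
        + Nat.factorial i • e.coeff i = 0 := by
    intro i hi
    have h1 := hder i hi
    rw [hpe, iterate_map_add derivative i, eval_add, iterate_derivative_X_pow_eq_C_mul,
      eval_mul, eval_C, eval_pow, eval_X,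
      aux_eval_inr _ (hfst' i) b, coeff_iterate_derivative] at h1
    simpa [Nat.descFactorial_self] using h1
  have hlow : ∀ i, i < n - 1 → e.coeff i = 0 := by
    intro i hi
    have h1 := key i (by omega)
    rw [aux_inr_pow b (n - i) (by omega), mul_zero, zero_add] at h1
    exact aux_kill (Nat.factorial i) _ (hfac i (by omega)) (hfst i) h1
  have htop : e.coeff (n - 1) = -(((n : ℕ) : DualNumber k) * inr b) := by
    have h1 := key (n - 1) (by omega)
    have hnn : n - (n - 1) = 1 := by omega
    rw [hnn, pow_one] at h1
    have hd : n.descFactorial (n - 1) = Nat.factorial (n - 1) * n := by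
      rw [Nat.descFactorial_eq_factorial_mul_choose]
      congr 1
      have h2 : n.choose (n - 1) = n.choose 1 := Nat.choose_symm (by omega)
      rw [h2, Nat.choose_one_right]
    rw [hd] at h1
    have hrw : ((Nat.factorial (n - 1)) : ℕ) • (((n : ℕ) : DualNumber k) * inr b)
        = (((Nat.factorial (n - 1)) * n : ℕ) : DualNumber k) * inr b := by
      rw [nsmul_eq_mul]; push_cast; ring
    have hsum0 : Nat.factorial (n - 1) • (e.coeff (n - 1) + ((n : ℕ) : DualNumber k) * inr b) = 0 := by
      rw [smul_add, hrw, add_comm]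
      exact h1
    have hfsum : fst (e.coeff (n - 1) + ((n : ℕ) : DualNumber k) * inr b) = 0 := by
      rw [fst_add, hfst (n - 1), fst_mul, fst_inr, mul_zero, add_zero]
    exact eq_neg_of_add_eq_zero_left
      (aux_kill (Nat.factorial (n - 1)) _ (hfac (n - 1) (by omega)) hfsum hsum0)
  have hhigh : ∀ j, n ≤ j → e.coeff j = 0 := fun j hj =>
    coeff_eq_zero_of_degree_lt (lt_of_lt_of_le hdeg (by exact_mod_cast hj))
  have hE : e = -(C (((n : ℕ) : DualNumber k) * inr b) * X ^ (n - 1)) := by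
    refine Polynomial.ext fun j => ?_
    rw [coeff_neg, coeff_C_mul, coeff_X_pow]
    rcases lt_trichotomy j (n - 1) with h | h | h
    · rw [hlow j h, if_neg (by omega)]
      simp
    · rw [h, htop, if_pos rfl, mul_one]
    · rw [hhigh j (by omega), if_neg (by omega)]
      simp
  have hmain : p = (X - C (inr b : DualNumber k)) ^ n := by
    obtain ⟨m, rfl⟩ : ∃ m, n = m + 1 := ⟨n - 1, by omega⟩
    simp only [Nat.add_sub_cancel] at hE
    rw [aux_pow_expand _ hcc m, hpe, hE]
    rw [map_mul, map_natCast (C : DualNumber k →+* Polynomial (DualNumber k))]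
    push_cast
    ring
  refine ⟨hmain, ?_⟩
  rw [Ideal.map_span, Set.image_singleton]
  have haev : (aeval (X + C (inr b : DualNumber k)) :
      Polynomial (DualNumber k) →ₐ[DualNumber k] Polynomial (DualNumber k)) p
      = (X : Polynomial (DualNumber k)) ^ n := by
    rw [hmain, map_pow, map_sub, aeval_X, aeval_C]
    have : X + C (inr b : DualNumber k) - algebraMap (DualNumber k)
        (Polynomial (DualNumber k)) (inr b) = X := by
      rw [Polynomial.algebraMap_eq]; ring
    rw [this]
  rw [haev]
end

section
/- Let $S = \mathrm{Spec}\,R$ for a commutative ring $R$, let $X = \mathrm{Spec}\,A$ with $A$ a flat $R$-algebra, and let $I \subseteq A$ be an ideal such that $A/I^n$ is $R$-flat for every $n \geq 1$. Then for every $n$, each $I^n$ is $R$-flat, and for every $R$-algebra $R \to k$ with $k$ a field, the natural map $I^n \otimes_R k \to A \otimes_R k$ is injective with image $(I \otimes_R k \cdot (A \otimes_R k))^n$; equivalently, $\mathfrak{m} I^n = \mathfrak{m} A \cap I^n$ for every maximal ideal $\mathfrak{m}$ of $R$ coming from a point of $S$, so the formation of the Rees algebra $\bigoplus_n I^n$ commutes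 with base change to fibers. -/
/-!
Tensoring the short exact sequence `0 → Iⁿ → A → A/Iⁿ → 0` with any `R`-module `P` stays left
exact because `A/Iⁿ` is flat, so `Iⁿ ⊗ P → A ⊗ P` is injective. Taking `P` an ideal of `R` and
using that `A` is flat gives flatness of `Iⁿ`; taking `P = R/𝔪` and identifying `M ⊗ R/𝔪` with
`M/𝔪M` turns injectivity into `𝔪A ∩ Iⁿ = 𝔪Iⁿ`.
-/

open TensorProduct LinearMap Function

section ShortExact

variable {R N M Q : Type*} [CommRing R] [AddCommGroup N] [AddCommGroup M] [AddCommGroup Q]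
  [Module R N] [Module R M] [Module R Q] [Module.Flat R Q]
  {f : N →ₗ[R] M} {g : M →ₗ[R] Q}

theorem LinearMap.rTensor_injective_of_exact_of_flat (hf : Injective f) (hg : Surjective g)
    (hfg : Exact f g) (P : Type*) [AddCommGroup P] [Module R P] :
    Injective (f.rTensor P) :=
  (lTensor_inj_iff_rTensor_inj P f).mp (lTensor_injective_of_exact_of_flat g hg f hf hfg P)

theorem Module.Flat.of_exact_of_flat [Module.Flat R M] (hf : Function.Injective f)
    (hg : Surjective g) (hfg : Exact f g) : Module.Flat R N := by
  refine Module.Flat.iff_rTensor_injective'.mpr fun J ↦ ?_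
  have hsquare : J.subtype.rTensor M ∘ₗ f.lTensor J = f.lTensor R ∘ₗ J.subtype.rTensor N := by
    rw [rTensor_comp_lTensor, lTensor_comp_rTensor]
  have hinj : Function.Injective (J.subtype.rTensor M ∘ₗ f.lTensor J) :=
    (Module.Flat.iff_rTensor_injective'.mp ‹_› J).comp
      ((lTensor_inj_iff_rTensor_inj J f).mpr (rTensor_injective_of_exact_of_flat hf hg hfg J))
  rw [hsquare, coe_comp] at hinj
  exact hinj.of_comp

end ShortExact

theorem Submodule.comap_smul_top_of_rTensor_injective {R N M : Type*} [CommRing R]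
    [AddCommGroup N] [AddCommGroup M] [Module R N] [Module R M] (𝔞 : Ideal R) (f : N →ₗ[R] M)
    (hf : Injective (f.rTensor (R ⧸ 𝔞))) :
    (𝔞 • ⊤ : Submodule R M).comap f = 𝔞 • ⊤ := by
  refine le_antisymm (fun x hx ↦ ?_) (smul_top_le_comap_smul_top 𝔞 f)
  have htensor : x ⊗ₜ[R] (1 : R ⧸ 𝔞) = 0 := hf <| by
    rw [rTensor_tmul, map_zero, ← tensorQuotEquivQuotSMul_symm_mk,
      (Submodule.Quotient.mk_eq_zero _ (x := f x)).mpr hx, map_zero]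
  rwa [← Submodule.Quotient.mk_eq_zero, ← (tensorQuotEquivQuotSMul N 𝔞).symm.map_eq_zero_iff,
    tensorQuotEquivQuotSMul_symm_mk]

theorem Ideal.rTensor_subtype_injective_of_flat_quotient {R A : Type*} [CommRing R] [CommRing A]
    [Algebra R A] (I : Ideal A) [Module.Flat R (A ⧸ I)] (P : Type*) [AddCommGroup P]
    [Module R P] : Injective ((I.subtype.restrictScalars R).rTensor P) :=
  rTensor_injective_of_exact_of_flat (f := I.subtype.restrictScalars R)
    (g := I.mkQ.restrictScalars R) Subtype.coe_injective I.mkQ_surjective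
    (exact_subtype_mkQ I) P

theorem Ideal.flat_of_flat_quotient {R A : Type*} [CommRing R] [CommRing A] [Algebra R A]
    [Module.Flat R A] (I : Ideal A) [Module.Flat R (A ⧸ I)] : Module.Flat R I :=
  Module.Flat.of_exact_of_flat (f := I.subtype.restrictScalars R)
    (g := I.mkQ.restrictScalars R) Subtype.coe_injective I.mkQ_surjective (exact_subtype_mkQ I)

theorem Ideal.map_mul_eq_map_inf_of_flat_quotient {R A : Type*} [CommRing R] [CommRing A]
    [Algebra R A] (I : Ideal A) [Module.Flat R (A ⧸ I)] (𝔞 : Ideal R) :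
    𝔞.map (algebraMap R A) * I = 𝔞.map (algebraMap R A) ⊓ I := by
  set f := I.subtype.restrictScalars R
  have hrange : range f = I.restrictScalars R := by
    rw [range_restrictScalars, Submodule.range_subtype]
  apply Submodule.restrictScalars_injective R
  rw [Submodule.restrictScalars_inf, ← smul_top_eq_map, ← smul_eq_mul, smul_restrictScalars,
    ← hrange, inf_comm, ← Submodule.map_comap_eq,
    Submodule.comap_smul_top_of_rTensor_injective 𝔞 f
      (I.rTensor_subtype_injective_of_flat_quotient _),
    Submodule.map_smul'', Submodule.map_top]

open TensorProduct in
/-- if `A` is a flat `R`-algebra and `I ⊆ A` an ideal with `A/Iⁿ` flat over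
`R` for all `n ≥ 1`, then each `Iⁿ` is `R`-flat, the natural map `Iⁿ ⊗_R κ → A ⊗_R κ` is
injective for every residue field `κ`, and `𝔪·Iⁿ = 𝔪A ⊓ Iⁿ` for every maximal ideal `𝔪`
of `R`: the formation of the Rees algebra `⊕ Iⁿ` (hence of the blowup `Bl_I X → S`)
commutes with base change to fibers. -/
theorem stmt_18 (R A : Type*) [CommRing R] [CommRing A] [Algebra R A]
    (hA : Module.Flat R A) (I : Ideal A)
    (hquot : ∀ n : ℕ, 1 ≤ n → Module.Flat R (A ⧸ I ^ n)) :
    (∀ n : ℕ, Module.Flat R (I ^ n : Ideal A)) ∧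
    (∀ n : ℕ, ∀ (κ : Type*) [Field κ] [Algebra R κ],
      Function.Injective
        (LinearMap.rTensor κ (((I ^ n : Ideal A).subtype).restrictScalars R))) ∧
    (∀ 𝔪 : Ideal R, 𝔪.IsMaximal → ∀ n : ℕ,
      Ideal.map (algebraMap R A) 𝔪 * I ^ n = Ideal.map (algebraMap R A) 𝔪 ⊓ I ^ n) := by
  have hflat (n : ℕ) : Module.Flat R (A ⧸ I ^ n) := by
    cases n with
    | zero => rw [pow_zero, Ideal.one_eq_top]; infer_instance
    | succ n => exact hquot (n + 1) n.succ_pos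
  exact ⟨fun n ↦ (I ^ n).flat_of_flat_quotient, fun n κ _ _ ↦
    (I ^ n).rTensor_subtype_injective_of_flat_quotient κ, fun 𝔪 _ n ↦
    (I ^ n).map_mul_eq_map_inf_of_flat_quotient 𝔪⟩
end
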